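/- arXiv:2101.00486 — 2 statements merged into one kernel-verified Lean document; each statement's English description precedes it below -/
import Mathlib

section
/- Let v = (v_0,...,v_{2k}) ∈ ℝ^{2k+1} with v_0 > 0 be a singular sequence of rank r ≤ k with A_v positive semidefinite and positively recursively generated. Define v_{2k+1} and v_{2k+2} by the recursion v_j = φ_0 v_{j-r} + ... + φ_{r-1} v_{j-1} for j = 2k+1, 2k+2. Then these are the unique real numbers such that the extended Hankel matrix A_{(v,v_{2k+1},v_{2k+2})} of size (k+2)×(k+2) is positive semidefinite with the same rank as A_v. -/
open Matrix MeasureTheory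

noncomputable section

/-- The `(k+1) × (k+1)` Hankel matrix `A_v = (v_{i+j})_{i,j=0}^k`. -/
def hankel (k : ℕ) (v : ℕ → ℝ) : Matrix (Fin (k+1)) (Fin (k+1)) ℝ :=
  Matrix.of fun i j => v (i.1 + j.1)

/-- The top-left `r × r` corner `A_v(r-1) = (v_{i+j})_{i,j=0}^{r-1}`. -/
def hcorner (v : ℕ → ℝ) (r : ℕ) : Matrix (Fin r) (Fin r) ℝ :=
  Matrix.of fun i j => v (i.1 + j.1)

/-- The `(j+1)`-th column of the Hankel matrix `A_v`. -/
def hcol (k : ℕ) (v : ℕ → ℝ) (j : ℕ) : Fin (k+1) → ℝ :=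
  fun i => v (i.1 + j)

/-- `r = rank v`: column `v_r` lies in the span of the preceding columns, and `r`
is minimal with this property. -/
def seqRank (k : ℕ) (v : ℕ → ℝ) (r : ℕ) : Prop :=
  hcol k v r ∈ Submodule.span ℝ (hcol k v '' {j | j < r}) ∧
  ∀ i < r, hcol k v i ∉ Submodule.span ℝ (hcol k v '' {j | j < i})

/-- `φ = A_v(r-1)⁻¹ (v_r,…,v_{2r-1})ᵀ`. -/
def phi (v : ℕ → ℝ) (r : ℕ) : Fin r → ℝ :=
  (hcorner v r)⁻¹.mulVec fun i => v (r + i.1)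

/-
The first `r` columns of `A_v` are linearly independent by minimality of `r`, so the corner
`A_v(r-1)`, a principal submatrix of the positive semidefinite `A_v`, is positive definite.
The recursion propagates to the extension and puts every column of the extended Hankel
matrix into the span of its first `r` columns. A Hermitian matrix with this property factors
as `Dᴴ A_v(r-1)⁻¹ D`, with `D` its first `r` rows, so it is positive semidefinite, and its rank
is `r = rank A_v`. Conversely, for any extension of rank `r` the last column lies in the span
of the first `r`; reading off the first `r` rows forces the coefficients to be
`A_v(r-1)⁻¹ (v_{k+1}, …, v_{k+r})`, which determines the two new entries.
-/

open Set Submodule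

theorem linearIndepOn_Iio_of_notMem_span {K V : Type*} [DivisionRing K] [AddCommGroup V]
    [Module K V] {f : ℕ → V} {r : ℕ} (h : ∀ i < r, f i ∉ span K (f '' Iio i)) :
    LinearIndepOn K f (Iio r) := by
  induction r with
  | zero => simp
  | succ n ih =>
    rw [show Iio (n + 1) = insert n (Iio n) by ext; simp]
    exact (ih fun i hi => h i (by omega)).insert (h n (by omega))

open scoped ComplexOrder

namespace Matrix

variable {𝕜 : Type*} [RCLike 𝕜] {m n : Type*} [Fintype m] [Fintype n]

theorem PosSemidef.posDef_submatrix_of_linearIndependent [DecidableEq n] {A : Matrix n n 𝕜}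
    (hA : A.PosSemidef) {e : m → n} (he : LinearIndependent 𝕜 fun j => A.col (e j)) :
    (A.submatrix e e).PosDef := by
  set P : Matrix n m 𝕜 := (1 : Matrix n n 𝕜).submatrix id e
  have hAP : A * P = A.submatrix id e := mul_submatrix_one (Equiv.refl n) e A
  have hsub : A.submatrix e e = Pᴴ * A * P := by
    rw [Matrix.mul_assoc, hAP, conjTranspose_submatrix, conjTranspose_one]
    simpa using (one_submatrix_mul e (Equiv.refl n) (A.submatrix id e)).symm
  refine .of_dotProduct_mulVec_pos (hA.1.submatrix e) fun x hx =>
    ((hA.submatrix e).dotProduct_mulVec_nonneg x).lt_of_ne' fun h0 => hx ?_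
  have hker : A *ᵥ (P *ᵥ x) = 0 := by
    rw [← hA.dotProduct_mulVec_zero_iff]
    simpa only [hsub, star_mulVec, dotProduct_mulVec, vecMul_vecMul] using h0
  rw [mulVec_mulVec, hAP, mulVec_eq_sum] at hker
  simp only [op_smul_eq_smul] at hker
  funext j
  exact Fintype.linearIndependent_iff.1 he x hker j

theorem posSemidef_of_forall_mem_span_cols [DecidableEq m] {A : Matrix n n 𝕜}
    (hA : A.IsHermitian) {e : m → n} (hM : (A.submatrix e e).PosDef)
    (hspan : ∀ j, A.col j ∈ span 𝕜 (range fun i => A.col (e i))) : A.PosSemidef := by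
  choose C hC using fun j => (mem_span_range_iff_exists_fun 𝕜).1 (hspan j)
  set Cm : Matrix m n 𝕜 := of fun i j => C j i
  set D := A.submatrix e id
  have hcols : A = A.submatrix id e * Cm := by
    ext k j
    simpa [Cm, mul_apply, Finset.sum_apply, mul_comm] using (congrFun (hC j) k).symm
  have hrows : D = A.submatrix e e * Cm := by
    ext a j
    exact congrFun (congrFun hcols (e a)) j
  have hDH : Dᴴ = A.submatrix id e := by rw [conjTranspose_submatrix, hA.eq]
  have hfactor : A = Dᴴ * (A.submatrix e e)⁻¹ * D := by
    rw [Matrix.mul_assoc, hDH, hrows, nonsing_inv_mul_cancel_left _ _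
      ((isUnit_iff_isUnit_det _).1 hM.isUnit)]
    exact hcols
  rw [hfactor]
  exact hM.inv.posSemidef.conjTranspose_mul_mul_same D

theorem rank_eq_card_iff_forall_mem_span_cols {K : Type*} [Field K] {A : Matrix m n K}
    {ι : Type*} [Fintype ι] {e : ι → n} (he : LinearIndependent K fun i => A.col (e i)) :
    A.rank = Fintype.card ι ↔ ∀ j, A.col j ∈ span K (range fun i => A.col (e i)) := by
  have hle : span K (range fun i => A.col (e i)) ≤ span K (range A.col) :=
    span_mono (range_comp_subset_range e A.col)
  rw [rank_eq_finrank_span_cols, ← finrank_span_eq_card he]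
  constructor
  · intro h j
    rw [eq_of_le_of_finrank_eq hle h.symm]
    exact subset_span (mem_range_self j)
  · intro h
    rw [le_antisymm (span_le.2 (range_subset_iff.2 h)) hle]

end Matrix

section Hankel

variable {k r : ℕ} {v w : ℕ → ℝ}

theorem isHermitian_hankel (K : ℕ) (u : ℕ → ℝ) : (hankel K u).IsHermitian := by
  ext i j
  simp [hankel, add_comm]

theorem rank_hankel_eq_iff {K : ℕ} {u : ℕ → ℝ} (hr : r ≤ K + 1)
    (hli : LinearIndependent ℝ fun m : Fin r => hcol K u m) :
    (hankel K u).rank = r ↔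
      ∀ j : Fin (K + 1), hcol K u j ∈ span ℝ (range fun m : Fin r => hcol K u m) := by
  have h := rank_eq_card_iff_forall_mem_span_cols (A := hankel K u) (e := Fin.castLE hr) hli
  rwa [Fintype.card_fin] at h

theorem posSemidef_hankel_of_forall_mem_span {K : ℕ} {u : ℕ → ℝ} (hr : r ≤ K + 1)
    (hM : (hcorner u r).PosDef)
    (hspan : ∀ j : Fin (K + 1), hcol K u j ∈ span ℝ (range fun m : Fin r => hcol K u m)) :
    (hankel K u).PosSemidef :=
  posSemidef_of_forall_mem_span_cols (isHermitian_hankel K u) (e := Fin.castLE hr) hM hspan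

theorem linearIndependent_hcol_of_seqRank (h : seqRank k v r) :
    LinearIndependent ℝ fun m : Fin r => hcol k v m :=
  (linearIndepOn_Iio_of_notMem_span h.2).comp (fun m : Fin r => (⟨m, m.2⟩ : Iio r))
    fun _ _ hab => Fin.ext (congrArg Subtype.val hab)

theorem hcol_mem_span_of_recursion {K : ℕ} {u : ℕ → ℝ} {φ : Fin r → ℝ}
    (hrec : ∀ n, r ≤ n → n ≤ 2 * K → u n = ∑ i, φ i * u (n - r + i)) {j : ℕ}
    (hj : j ≤ K) :
    hcol K u j ∈ span ℝ (range fun m : Fin r => hcol K u m) := by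
  induction j using Nat.strong_induction_on with
  | _ j ih =>
    by_cases hjr : j < r
    · exact subset_span ⟨⟨j, hjr⟩, rfl⟩
    have hshift : hcol K u j = ∑ i, φ i • hcol K u (j - r + i) := by
      funext a
      simp only [hcol, Finset.sum_apply, Pi.smul_apply, smul_eq_mul]
      rw [hrec _ (by omega) (by omega)]
      exact Finset.sum_congr rfl fun i _ => by congr 2; omega
    rw [hshift]
    exact sum_mem fun i _ => smul_mem _ _ (ih _ (by omega) (by omega))

theorem linearIndependent_hcol_succ (hr : r ≤ k + 1) (hw : ∀ j ≤ 2 * k, w j = v j)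
    (hli : LinearIndependent ℝ fun m : Fin r => hcol k v m) :
    LinearIndependent ℝ fun m : Fin r => hcol (k + 1) w m := by
  refine .of_comp (LinearMap.funLeft ℝ ℝ Fin.castSucc) ?_
  convert hli using 1
  funext m i
  simp only [Function.comp_apply, LinearMap.funLeft_apply, hcol, Fin.val_castSucc]
  exact hw _ (by omega)

theorem hcol_last_eq_of_mem_span (hr : r ≤ k) (hM : IsUnit (hcorner v r))
    (hw : ∀ j ≤ 2 * k, w j = v j)
    (hmem : hcol (k + 1) w (k + 1) ∈ span ℝ (range fun m : Fin r => hcol (k + 1) w m)) :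
    hcol (k + 1) w (k + 1) =
      fun i : Fin (k + 2) =>
        ∑ m, ((hcorner v r)⁻¹ *ᵥ fun a => v (a + (k + 1))) m * v (i + m) := by
  obtain ⟨c, hc⟩ := (mem_span_range_iff_exists_fun ℝ).1 hmem
  have hlast : hcol (k + 1) w (k + 1) = fun i : Fin (k + 2) => ∑ m, c m * v (i + m) := by
    rw [← hc]
    funext i
    simp only [Finset.sum_apply, Pi.smul_apply, smul_eq_mul, hcol]
    exact Finset.sum_congr rfl fun m _ => by rw [hw _ (by omega)]
  have hMc : hcorner v r *ᵥ c = fun a : Fin r => v (a + (k + 1)) := by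
    funext a
    have := congrFun hlast ⟨a, by omega⟩
    simp only [hcol] at this
    rw [← hw _ (by omega), this]
    simp [mulVec, dotProduct, hcorner, mul_comm]
  rw [hlast, ← hMc, mulVec_mulVec, nonsing_inv_mul _ ((isUnit_iff_isUnit_det _).1 hM), one_mulVec]

theorem eq_of_hcol_last_eq {u : ℕ → ℝ} (h : hcol (k + 1) w (k + 1) = hcol (k + 1) u (k + 1)) :
    w (2 * k + 1) = u (2 * k + 1) ∧ w (2 * k + 2) = u (2 * k + 2) := by
  have h₁ := congrFun h ⟨k, by omega⟩
  have h₂ := congrFun h (Fin.last _)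
  simp only [hcol, Fin.val_last] at h₁ h₂
  rw [show k + (k + 1) = 2 * k + 1 by omega] at h₁
  rw [show k + 1 + (k + 1) = 2 * k + 2 by omega] at h₂
  exact ⟨h₁, h₂⟩

end Hankel

theorem stmt4_general (k r : ℕ) (v u : ℕ → ℝ)
    (hpsd : (hankel k v).PosSemidef)
    (hr : r ≤ k) (hrank : seqRank k v r)
    (hprg : ∀ j, r ≤ j → j ≤ 2*k → v j = ∑ i : Fin r, phi v r i * v (j - r + i.1))
    (hu : ∀ j ≤ 2*k, u j = v j)
    (hu1 : u (2*k+1) = ∑ i : Fin r, phi v r i * u (2*k+1 - r + i.1))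
    (hu2 : u (2*k+2) = ∑ i : Fin r, phi v r i * u (2*k+2 - r + i.1)) :
    (hankel (k+1) u).PosSemidef ∧ (hankel (k+1) u).rank = (hankel k v).rank ∧
    ∀ w : ℕ → ℝ, (∀ j ≤ 2*k, w j = v j) → (hankel (k+1) w).PosSemidef →
      (hankel (k+1) w).rank = (hankel k v).rank →
      w (2*k+1) = u (2*k+1) ∧ w (2*k+2) = u (2*k+2) := by
  have hli := linearIndependent_hcol_of_seqRank hrank
  have hli_ext : ∀ w : ℕ → ℝ, (∀ j ≤ 2 * k, w j = v j) →
      LinearIndependent ℝ fun m : Fin r => hcol (k + 1) w m :=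
    fun w hw => linearIndependent_hcol_succ (by omega) hw hli
  have hM : (hcorner v r).PosDef :=
    hpsd.posDef_submatrix_of_linearIndependent (e := Fin.castLE (by omega)) hli
  have hrec : ∀ n, r ≤ n → n ≤ 2 * (k + 1) → u n = ∑ i, phi v r i * u (n - r + i) := by
    intro n hrn hn
    rcases (show n ≤ 2 * k ∨ n = 2 * k + 1 ∨ n = 2 * k + 2 by omega) with hn | rfl | rfl
    · rw [hu n hn, hprg n hrn hn]
      exact Finset.sum_congr rfl fun i _ => by rw [hu _ (by omega)]
    · exact hu1
    · exact hu2
  have hspan_u (j : Fin (k + 2)) := hcol_mem_span_of_recursion hrec j.is_le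
  have hrank_v : (hankel k v).rank = r :=
    (rank_hankel_eq_iff (by omega) hli).2 fun j => hcol_mem_span_of_recursion hprg j.is_le
  have hrank_u : (hankel (k + 1) u).rank = r :=
    (rank_hankel_eq_iff (by omega) (hli_ext u hu)).2 hspan_u
  have hpsd_u : (hankel (k + 1) u).PosSemidef := by
    have hMu : hcorner u r = hcorner v r := by
      ext a b
      exact hu _ (by omega)
    exact posSemidef_hankel_of_forall_mem_span (by omega) (hMu ▸ hM) hspan_u
  have hlast (w : ℕ → ℝ) (hw : ∀ j ≤ 2 * k, w j = v j)
      (hwr : (hankel (k + 1) w).rank = r) :=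
    hcol_last_eq_of_mem_span hr hM.isUnit hw <|
      (rank_hankel_eq_iff (by omega) (hli_ext w hw)).1 hwr (Fin.last _)
  exact ⟨hpsd_u, hrank_u.trans hrank_v.symm, fun w hw _ hwr =>
    eq_of_hcol_last_eq ((hlast w hw (hwr.trans hrank_v)).trans (hlast u hu hrank_u).symm)⟩

theorem stmt4 (k r : ℕ) (v u : ℕ → ℝ) (hv0 : 0 < v 0)
    (hpsd : (hankel k v).PosSemidef) (hsing : (hankel k v).det = 0)
    (hr : r ≤ k) (hrank : seqRank k v r)
    (hprg : ∀ j, r ≤ j → j ≤ 2*k → v j = ∑ i : Fin r, phi v r i * v (j - r + i.1))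
    (hu : ∀ j ≤ 2*k, u j = v j)
    (hu1 : u (2*k+1) = ∑ i : Fin r, phi v r i * u (2*k+1 - r + i.1))
    (hu2 : u (2*k+2) = ∑ i : Fin r, phi v r i * u (2*k+2 - r + i.1)) :
    (hankel (k+1) u).PosSemidef ∧ (hankel (k+1) u).rank = (hankel k v).rank ∧
    ∀ w : ℕ → ℝ, (∀ j ≤ 2*k, w j = v j) → (hankel (k+1) w).PosSemidef →
      (hankel (k+1) w).rank = (hankel k v).rank →
      w (2*k+1) = u (2*k+1) ∧ w (2*k+2) = u (2*k+2) :=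
  stmt4_general k r v u hpsd hr hrank hprg hu hu1 hu2

end
end

section
/- Let v = (v_0,...,v_{2k}) ∈ ℝ^{2k+1} with Hankel matrix A_v = (v_{i+j})_{i,j=0}^k positive semidefinite and singular, v_0 > 0, of rank r ≤ k, and suppose v is positively recursively generated with φ_0 ≠ 0 (where φ = A_v(r-1)^{-1}(v_r,...,v_{2r-1})^T). Then the generating polynomial p(x) = x^r − Σ_{i=0}^{r-1} φ_i x^i has r distinct real roots, all nonzero. -/
open Matrix MeasureTheory

noncomputable section

/-! The corner `A = A_v(r-1)` is positive definite: its columns are the first `r` columns of the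
positive semidefinite `A_v`, and these are linearly independent. The recursion
`v_{i+r} = ∑ φ_l v_{i+l}` says that `A C = (v_{i+j+1})_{i,j}` for the companion matrix `C` of `p`,
so `A C` is symmetric and `C` is similar, via `√A`, to the symmetric matrix `√A⁻¹ (A C) √A⁻¹`.
Hence `C` has `r` linearly independent real eigenvectors. Every eigenvalue of `C` is a root of `p`,
and every eigenspace of a companion matrix is a line (an eigenvector is determined by its last
coordinate), so the `r` eigenvalues are distinct. They are nonzero because `p 0 = -φ_0 ≠ 0`. -/

lemma linearIndependent_of_notMem_span_image_lt {K V : Type*} [DivisionRing K] [AddCommGroup V]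
    [Module K V] {f : ℕ → V} {n : ℕ}
    (hf : ∀ i < n, f i ∉ Submodule.span K (f '' {j | j < i})) :
    LinearIndependent K (fun i : Fin n => f i) := by
  induction n with
  | zero => exact linearIndependent_empty_type
  | succ n ih =>
    have hsnoc : (fun i : Fin (n + 1) => f i) = Fin.snoc (fun i : Fin n => f i) (f n) := by
      ext i
      induction i using Fin.lastCases <;> simp
    have hrange : Set.range (fun i : Fin n => f i) = f '' {j | j < n} := by
      ext; simp [Fin.exists_iff]
    rw [hsnoc]
    refine (ih fun i hi => hf i (by omega)).finSnoc ?_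
    rw [hrange]
    exact hf n n.lt_succ_self

open scoped ComplexOrder MatrixOrder in
lemma Matrix.PosSemidef.posDef_submatrix_of_linearIndependent_col {𝕜 m n : Type*} [RCLike 𝕜]
    [Fintype m] [Fintype n] [DecidableEq n] {H : Matrix n n 𝕜} (hH : H.PosSemidef) (e : m → n)
    (he : LinearIndependent 𝕜 (H.submatrix id e).col) : (H.submatrix e e).PosDef := by
  set S := CFC.sqrt H
  have hHS : H = Sᴴ * S := by
    rw [← star_eq_conjTranspose, (CFC.sqrt_nonneg H).isSelfAdjoint.star_eq,
      CFC.sqrt_mul_sqrt_self H hH.nonneg]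
  have hcol : H.submatrix id e = Sᴴ * S.submatrix id e := by
    rw [hHS, submatrix_mul _ _ id id e Function.bijective_id, submatrix_id_id]
  have hgram : H.submatrix e e = (S.submatrix id e)ᴴ * S.submatrix id e := by
    rw [hHS, submatrix_mul _ _ e id e Function.bijective_id, conjTranspose_submatrix]
  rw [hgram]
  refine PosDef.conjTranspose_mul_self _ fun x y hxy => mulVec_injective_iff.2 he ?_
  rw [hcol, ← mulVec_mulVec, ← mulVec_mulVec, hxy]

lemma hcorner_posDef {k r : ℕ} {v : ℕ → ℝ} (hpsd : (hankel k v).PosSemidef) (hr : r ≤ k + 1)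
    (hli : ∀ i < r, hcol k v i ∉ Submodule.span ℝ (hcol k v '' {j | j < i})) :
    (hcorner v r).PosDef :=
  hpsd.posDef_submatrix_of_linearIndependent_col (Fin.castLE hr)
    (linearIndependent_of_notMem_span_image_lt hli)

section Companion

variable {R : Type*} [CommRing R] {m : ℕ}

def companion (φ : Fin (m + 1) → R) : Matrix (Fin (m + 1)) (Fin (m + 1)) R :=
  Matrix.of fun i j => (if (i : ℕ) = j + 1 then 1 else 0) + if j = Fin.last m then φ i else 0

variable {φ : Fin (m + 1) → R} {w : Fin (m + 1) → R} {t : R}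

lemma companion_mulVec_succ (i : Fin m) :
    (companion φ *ᵥ w) i.succ = w i.castSucc + φ i.succ * w (Fin.last m) := by
  have hsub (j : Fin (m + 1)) : (i : ℕ) = j ↔ i.castSucc = j := by simp [Fin.ext_iff]
  simp [companion, mulVec, dotProduct, add_mul, Finset.sum_add_distrib, hsub]

lemma powers_vecMul_companion :
    (fun i : Fin (m + 1) => t ^ (i : ℕ)) ᵥ* companion φ =
      t • (fun i : Fin (m + 1) => t ^ (i : ℕ)) -
        (t ^ (m + 1) - ∑ i, φ i * t ^ (i : ℕ)) • Pi.single (Fin.last m) 1 := by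
  ext j
  induction j using Fin.lastCases with
  | last =>
    have hlt (i : Fin (m + 1)) : (i : ℕ) ≠ m + 1 := i.isLt.ne
    simp [companion, vecMul, dotProduct, hlt, mul_comm, pow_succ']
  | cast j =>
    have hsucc (i : Fin (m + 1)) : (i : ℕ) = j + 1 ↔ i = j.succ := by simp [Fin.ext_iff]
    simp [companion, vecMul, dotProduct, hsucc, pow_succ']

lemma eq_zero_of_companion_mulVec_eq_smul (hw : companion φ *ᵥ w = t • w)
    (hlast : w (Fin.last m) = 0) : w = 0 := by
  ext i
  induction i using Fin.reverseInduction with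
  | last => exact hlast
  | cast i ih =>
    have hrow := congrFun hw i.succ
    rw [companion_mulVec_succ, Pi.smul_apply, ih, hlast] at hrow
    simpa using hrow

lemma pow_sub_sum_mul_last_eq_zero_of_companion_mulVec_eq_smul (hw : companion φ *ᵥ w = t • w) :
    (t ^ (m + 1) - ∑ i, φ i * t ^ (i : ℕ)) * w (Fin.last m) = 0 := by
  have h := dotProduct_mulVec (fun i : Fin (m + 1) => t ^ (i : ℕ)) (companion φ) w
  simp only [hw, powers_vecMul_companion, sub_dotProduct, dotProduct_smul, smul_dotProduct,
    single_one_dotProduct, smul_eq_mul] at h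
  linear_combination h

end Companion

lemma injective_of_companion_eigenvectors {K ι : Type*} [Field K] {m : ℕ}
    {φ : Fin (m + 1) → K} {x : ι → K} {u : ι → Fin (m + 1) → K} (hu : LinearIndependent K u)
    (hxu : ∀ ℓ, companion φ *ᵥ u ℓ = x ℓ • u ℓ) : Function.Injective x := by
  have hlast (ℓ : ι) : u ℓ (Fin.last m) ≠ 0 := fun h =>
    hu.ne_zero ℓ (eq_zero_of_companion_mulVec_eq_smul (hxu ℓ) h)
  intro a b hab
  by_contra hne
  set w := u b (Fin.last m) • u a + (-u a (Fin.last m)) • u b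
  have hw : companion φ *ᵥ w = x a • w := by
    simp only [w, mulVec_add, mulVec_smul, hxu, hab, smul_add, smul_comm (x b)]
  have hw0 : w = 0 := eq_zero_of_companion_mulVec_eq_smul hw (by simp [w, mul_comm])
  exact hlast b ((LinearIndepOn.pair_iff u hne).1 (hu.linearIndepOn _) _ _ hw0).1

open scoped MatrixOrder in
lemma exists_linearIndependent_eigenvectors_of_posDef_mul {n : Type*} [Fintype n]
    [DecidableEq n] {A C : Matrix n n ℝ} (hA : A.PosDef) (hAC : (A * C).IsHermitian) :
    ∃ (x : n → ℝ) (u : n → n → ℝ), LinearIndependent ℝ u ∧ ∀ ℓ, C *ᵥ u ℓ = x ℓ • u ℓ := by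
  set S := CFC.sqrt A
  have hS : S.IsHermitian := (CFC.sqrt_nonneg A).isSelfAdjoint
  have hSS : S * S = A := CFC.sqrt_mul_sqrt_self A hA.posSemidef.nonneg
  have hSunit : IsUnit S := (CFC.isUnit_sqrt_iff A hA.posSemidef.nonneg).2 hA.isUnit
  have hSdet : IsUnit S.det := (isUnit_iff_isUnit_det S).1 hSunit
  have hM : (S⁻¹ * (A * C) * S⁻¹).IsHermitian := by
    have h := isHermitian_conjTranspose_mul_mul S⁻¹ hAC
    rwa [hS.inv.eq] at h
  have hCS : C * S⁻¹ = S⁻¹ * (S⁻¹ * (A * C) * S⁻¹) := by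
    simp only [← hSS, ← Matrix.mul_assoc, nonsing_inv_mul S hSdet, Matrix.one_mul]
  refine ⟨hM.eigenvalues, fun ℓ => S⁻¹ *ᵥ hM.eigenvectorBasis ℓ, ?_, fun ℓ => ?_⟩
  · have hinj : Function.Injective (S⁻¹).mulVec :=
      mulVec_injective_iff_isUnit.2 (isUnit_nonsing_inv_iff.2 hSunit)
    exact hM.eigenvectorBasis.orthonormal.linearIndependent.map'
      ((S⁻¹).mulVecLin ∘ₗ (WithLp.linearEquiv 2 ℝ (n → ℝ)).toLinearMap)
      (LinearMap.ker_eq_bot.2 (hinj.comp (WithLp.linearEquiv 2 ℝ (n → ℝ)).injective))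
  · rw [mulVec_mulVec, hCS, ← mulVec_mulVec, hM.mulVec_eigenvectorBasis, mulVec_smul]

lemma hcorner_mul_companion {m : ℕ} {v : ℕ → ℝ} {φ : Fin (m + 1) → ℝ}
    (hrec : ∀ i : Fin (m + 1), v (i + (m + 1)) = ∑ l, φ l * v (i + l)) :
    hcorner v (m + 1) * companion φ = Matrix.of fun i j : Fin (m + 1) => v (i + j + 1) := by
  ext i j
  induction j using Fin.lastCases with
  | last =>
    have hlt (l : Fin (m + 1)) : (l : ℕ) ≠ m + 1 := l.isLt.ne
    simpa [hcorner, companion, mul_apply, hlt, mul_comm, add_assoc] using (hrec i).symm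
  | cast j =>
    have hsucc (l : Fin (m + 1)) : (l : ℕ) = j + 1 ↔ l = j.succ := by simp [Fin.ext_iff]
    simp [hcorner, companion, mul_apply, hsucc, add_assoc]

theorem stmt18_general (k r : ℕ) (v : ℕ → ℝ)
    (hpsd : (hankel k v).PosSemidef)
    (hr0 : 0 < r) (hr : r ≤ k) (hrank : seqRank k v r)
    (hprg : ∀ j, r ≤ j → j ≤ 2*k → v j = ∑ i : Fin r, phi v r i * v (j - r + i.1))
    (hphi0 : phi v r ⟨0, hr0⟩ ≠ 0) :
    ∃ x : Fin r → ℝ, Function.Injective x ∧ (∀ ℓ, x ℓ ≠ 0) ∧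
      ∀ ℓ, x ℓ ^ r - ∑ i : Fin r, phi v r i * x ℓ ^ i.1 = 0 := by
  obtain ⟨m, rfl⟩ := Nat.exists_eq_add_one_of_ne_zero hr0.ne'
  have hA : (hcorner v (m + 1)).PosDef := hcorner_posDef hpsd (by omega) hrank.2
  have hrec (i : Fin (m + 1)) : v (i + (m + 1)) = ∑ l, phi v (m + 1) l * v (i + l) := by
    simpa using hprg (i + (m + 1)) (by omega) (by omega)
  have hsymm : (hcorner v (m + 1) * companion (phi v (m + 1))).IsHermitian := by
    rw [hcorner_mul_companion hrec]
    ext i j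
    simp [add_comm (i : ℕ)]
  obtain ⟨x, u, hu, hxu⟩ := exists_linearIndependent_eigenvectors_of_posDef_mul hA hsymm
  have hroot (ℓ : Fin (m + 1)) : x ℓ ^ (m + 1) - ∑ i, phi v (m + 1) i * x ℓ ^ (i : ℕ) = 0 :=
    (mul_eq_zero.1 (pow_sub_sum_mul_last_eq_zero_of_companion_mulVec_eq_smul (hxu ℓ))).resolve_right
      fun h => hu.ne_zero ℓ (eq_zero_of_companion_mulVec_eq_smul (hxu ℓ) h)
  refine ⟨x, injective_of_companion_eigenvectors hu hxu, fun ℓ hx0 => hphi0 ?_, hroot⟩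
  simpa [hx0, Fin.sum_univ_succ] using hroot ℓ

theorem stmt18 (k r : ℕ) (v : ℕ → ℝ) (hv0 : 0 < v 0)
    (hpsd : (hankel k v).PosSemidef) (hsing : (hankel k v).det = 0)
    (hr0 : 0 < r) (hr : r ≤ k) (hrank : seqRank k v r)
    (hprg : ∀ j, r ≤ j → j ≤ 2*k → v j = ∑ i : Fin r, phi v r i * v (j - r + i.1))
    (hphi0 : phi v r ⟨0, hr0⟩ ≠ 0) :
    ∃ x : Fin r → ℝ, Function.Injective x ∧ (∀ ℓ, x ℓ ≠ 0) ∧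
      ∀ ℓ, x ℓ ^ r - ∑ i : Fin r, phi v r i * x ℓ ^ i.1 = 0 :=
  stmt18_general k r v hpsd hr0 hr hrank hprg hphi0
end
end
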